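/- The formal power series expansion of t·((1+t)^d + (1-t)^d)/((1+t)^d − (1-t)^d) has t⁴-coefficient equal to −(d²−1)(d²−4)/(45d). -/

import Mathlib

/-!
Comparing the coefficients of `t`, `t³`, `t⁵` in
`F · ((1+t)^d - (1-t)^d) = t · ((1+t)^d + (1-t)^d)` gives the triangular system
`2d F₀ = 2`, `2d F₂ + 2 C(d,3) F₀ = 2 C(d,2)`, `2d F₄ + 2 C(d,3) F₂ + 2 C(d,5) F₀ = 2 C(d,4)`,
whose successive solutions are `F₀ = 1/d`, `F₂ = (d²-1)/(3d)` and the claimed `F₄`.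
-/

open PowerSeries

namespace PowerSeries

variable {R : Type*}

theorem coeff_one_add_X_pow [CommSemiring R] (d n : ℕ) :
    coeff n ((1 + X : R⟦X⟧) ^ d) = d.choose n := by
  have : (1 + X : R⟦X⟧) ^ d = (((1 + Polynomial.X) ^ d : Polynomial R) : R⟦X⟧) := by simp
  rw [this, Polynomial.coeff_coe, Polynomial.coeff_one_add_X_pow]

theorem coeff_one_sub_X_pow [CommRing R] (d n : ℕ) :
    coeff n ((1 - X : R⟦X⟧) ^ d) = (-1) ^ n * d.choose n := by
  have : (1 - X : R⟦X⟧) ^ d = rescale (-1) ((1 + X) ^ d) := by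
    rw [map_pow, map_add, map_one, rescale_neg_one_X, sub_eq_add_neg]
  rw [this, coeff_rescale, coeff_one_add_X_pow]

theorem sum_coeff_mul_of_mul_eq [CommRing R] {d : ℕ} {F : R⟦X⟧}
    (hF : F * ((1 + X) ^ d - (1 - X) ^ d) = X * ((1 + X) ^ d + (1 - X) ^ d)) (n : ℕ) :
    ∑ i ∈ Finset.range (n + 2), coeff i F * ((1 - (-1) ^ (n + 1 - i)) * d.choose (n + 1 - i)) =
      (1 + (-1) ^ n) * d.choose n := by
  have h := congrArg (coeff (n + 1)) hF
  rw [coeff_succ_X_mul, coeff_mul, Finset.Nat.sum_antidiagonal_eq_sum_range_succ_mk] at h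
  simpa only [map_sub, map_add, coeff_one_add_X_pow, coeff_one_sub_X_pow, sub_mul, one_mul,
    add_mul] using h

end PowerSeries

/-- The `t⁴`-coefficient of `sign(t) = t·((1+t)^d + (1-t)^d)/((1+t)^d - (1-t)^d)`
equals `-(d²-1)(d²-4)/(45d)`. -/
theorem stmt_1 (d : ℕ) (hd : 1 ≤ d) (F : PowerSeries ℚ)
    (hF : F * ((1 + X) ^ d - (1 - X) ^ d) = X * ((1 + X) ^ d + (1 - X) ^ d)) :
    coeff 4 F = -(((d : ℚ) ^ 2 - 1) * ((d : ℚ) ^ 2 - 4)) / (45 * d) := by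
  have h1 : constantCoeff F * (2 * d) = 2 := by
    simpa [Finset.sum_range_succ, one_add_one_eq_two] using sum_coeff_mul_of_mul_eq hF 0
  have h3 : constantCoeff F * (2 * d.choose 3) + coeff 2 F * (2 * d) = 2 * d.choose 2 := by
    simpa [Finset.sum_range_succ, one_add_one_eq_two, Odd.neg_one_pow, Nat.odd_iff]
      using sum_coeff_mul_of_mul_eq hF 2
  have h5 : constantCoeff F * (2 * d.choose 5) + coeff 2 F * (2 * d.choose 3)
      + coeff 4 F * (2 * d) = 2 * d.choose 4 := by
    simpa [Finset.sum_range_succ, one_add_one_eq_two, Odd.neg_one_pow, Even.neg_one_pow,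
      Nat.odd_iff, Nat.even_iff] using sum_coeff_mul_of_mul_eq hF 4
  simp only [Nat.cast_choose_eq_descPochhammer_div, descPochhammer_succ_right, descPochhammer_zero,
    Polynomial.eval_mul, Polynomial.eval_X, Polynomial.eval_sub, Polynomial.eval_one,
    Polynomial.eval_natCast, Nat.factorial] at h3 h5
  have hF0 : d * constantCoeff F = 1 := by linear_combination h1 / 2
  have hF2 : 3 * d * coeff 2 F = d ^ 2 - 1 := by
    linear_combination (3 / 2) * h3 - ((d : ℚ) - 1) * (d - 2) / 2 * hF0
  rw [eq_div_iff (by positivity)]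
  linear_combination (45 / 2) * h5 - 5 / 2 * ((d : ℚ) - 1) * (d - 2) * hF2
    - 3 / 8 * ((d : ℚ) - 1) * (d - 2) * (d - 3) * (d - 4) * hF0
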